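/- Let G', G'' be generator matrices over 𝔽₂ with coset spectra D', D'', and let G = [[G', 0],[P, G'']] where P = G''_{[N''],Γ'} for a column subset Γ' of size N' ≤ N''. Then the coset spectrum D of G satisfies: D_i = D'_i for all i ≤ N', and for i > N', D_i ≤ min(D''_{i-N'} + N', 2·D''_{i-N'}). -/

import Mathlib

/-!
A row `(v, 0)` of the top block keeps its distance to the later rows' span,
since the rows `(w ∘ γ, w)` of the bottom block pay in the second coordinate
at least what they can save in the first. A row `(v ∘ γ, v)` of the bottom
block is at distance at most `d(v ∘ γ, w ∘ γ) + d(v, w)` from the stitched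
copy of a closest `w`, and the first term is at most both `N'` and `d(v, w)`.
-/

open Matrix

/-- The coset spectrum entry `D_i` of a matrix `G` over `𝔽₂`: the minimum Hamming
distance from the `i`-th row to the span of the later rows. -/
noncomputable def cosetD {k n : ℕ} (G : Matrix (Fin k) (Fin n) (ZMod 2)) (i : Fin k) : ℕ :=
  sInf ((fun w => hammingDist (G i) w) ''
    ((Submodule.span (ZMod 2) {v : Fin n → ZMod 2 | ∃ j, i < j ∧ v = G j} :
        Submodule (ZMod 2) (Fin n → ZMod 2)) : Set (Fin n → ZMod 2)))

section Hamming

variable {ι κ β : Type*} [Fintype ι] [Fintype κ] [DecidableEq β]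

theorem hammingDist_comp_le_of_injective {γ : ι → κ} (hγ : Function.Injective γ)
    (x y : κ → β) : hammingDist (x ∘ γ) (y ∘ γ) ≤ hammingDist x y := by
  refine Finset.card_le_card_of_injOn γ (fun a ha => ?_) hγ.injOn
  simpa using ha

theorem hammingDist_append {m n : ℕ} (a c : Fin m → β) (b d : Fin n → β) :
    hammingDist (Fin.append a b) (Fin.append c d) = hammingDist a c + hammingDist b d := by
  simp only [hammingDist, Finset.card_filter, Fin.sum_univ_add, Fin.append_left,
    Fin.append_right]

end Hamming

theorem Fin.append_add_append {M : Type*} [Add M] {m n : ℕ} (a c : Fin m → M)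
    (b d : Fin n → M) : Fin.append a b + Fin.append c d = Fin.append (a + c) (b + d) := by
  ext k
  refine Fin.addCases (fun j => ?_) (fun j => ?_) k <;> simp

theorem Fin.smul_append {S M : Type*} [SMul S M] {m n : ℕ} (r : S) (a : Fin m → M)
    (b : Fin n → M) : r • Fin.append a b = Fin.append (r • a) (r • b) := by
  ext k
  refine Fin.addCases (fun j => ?_) (fun j => ?_) k <;> simp

theorem reindex_fromBlocks_castAdd {α : Type*} {k l m n : ℕ}
    (A : Matrix (Fin l) (Fin m) α) (B : Matrix (Fin l) (Fin n) α)
    (C : Matrix (Fin k) (Fin m) α) (D : Matrix (Fin k) (Fin n) α) (i : Fin l) :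
    reindex finSumFinEquiv finSumFinEquiv (fromBlocks A B C D) (Fin.castAdd k i) =
      Fin.append (A i) (B i) := by
  ext c
  refine Fin.addCases (fun j => ?_) (fun j => ?_) c <;> simp

theorem reindex_fromBlocks_natAdd {α : Type*} {k l m n : ℕ}
    (A : Matrix (Fin l) (Fin m) α) (B : Matrix (Fin l) (Fin n) α)
    (C : Matrix (Fin k) (Fin m) α) (D : Matrix (Fin k) (Fin n) α) (i : Fin k) :
    reindex finSumFinEquiv finSumFinEquiv (fromBlocks A B C D) (Fin.natAdd l i) =
      Fin.append (C i) (D i) := by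
  ext c
  refine Fin.addCases (fun j => ?_) (fun j => ?_) c <;> simp

section Stitch

variable (R : Type*) [Semiring R] (m : ℕ) {n : ℕ}

def leftStitch : (Fin m → R) →ₗ[R] (Fin (m + n) → R) where
  toFun v := Fin.append v 0
  map_add' u v := by rw [Fin.append_add_append, add_zero]
  map_smul' r v := by rw [Fin.smul_append, smul_zero]; rfl

variable {m}

def rightStitch (γ : Fin m → Fin n) : (Fin n → R) →ₗ[R] (Fin (m + n) → R) where
  toFun v := Fin.append (v ∘ γ) v
  map_add' u v := by rw [Fin.append_add_append]; rfl
  map_smul' r v := by rw [Fin.smul_append]; rfl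

variable {R} [DecidableEq R]

theorem hammingDist_leftStitch (a c : Fin m → R) :
    hammingDist (leftStitch R m a) (leftStitch R m c : Fin (m + n) → R) = hammingDist a c := by
  simp [leftStitch, hammingDist_append]

theorem hammingDist_rightStitch_le {γ : Fin m → Fin n} (hγ : Function.Injective γ)
    (x y : Fin n → R) :
    hammingDist (rightStitch R γ x) (rightStitch R γ y) ≤
      min (hammingDist x y + m) (2 * hammingDist x y) := by
  have hcomp := hammingDist_comp_le_of_injective hγ x y
  have hcard : hammingDist (x ∘ γ) (y ∘ γ) ≤ m := by
    simpa using hammingDist_le_card_fintype (x := x ∘ γ) (y := y ∘ γ)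
  simp only [rightStitch, LinearMap.coe_mk, AddHom.coe_mk, hammingDist_append]
  omega

end Stitch

theorem hammingDist_le_leftStitch_add_rightStitch {R : Type*} [Ring R] [DecidableEq R]
    {m n : ℕ} {γ : Fin m → Fin n} (hγ : Function.Injective γ) (a u : Fin m → R) (z : Fin n → R) :
    hammingDist a u ≤ hammingDist (leftStitch R m a) (leftStitch R m u + rightStitch R γ z) := by
  have hnorm : hammingNorm (z ∘ γ) ≤ hammingNorm z := by
    simpa [hammingDist_zero_right] using hammingDist_comp_le_of_injective hγ z 0
  calc hammingDist a u
      ≤ hammingDist a (u + z ∘ γ) + hammingDist (u + z ∘ γ) u := hammingDist_triangle _ _ _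
    _ = hammingDist a (u + z ∘ γ) + hammingNorm (z ∘ γ) := by
        rw [hammingDist_comm (u + z ∘ γ), hammingDist_eq_hammingNorm u, neg_add_cancel_left]
    _ ≤ hammingDist a (u + z ∘ γ) + hammingNorm z := by gcongr
    _ = hammingDist (leftStitch R m a) (leftStitch R m u + rightStitch R γ z) := by
        simp [leftStitch, rightStitch, Fin.append_add_append, hammingDist_append]

section CosetSpectrum

variable {k l n p : ℕ}

def laterRowSpan (G : Matrix (Fin k) (Fin n) (ZMod 2)) (i : Fin k) :
    Submodule (ZMod 2) (Fin n → ZMod 2) :=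
  Submodule.span (ZMod 2) {v | ∃ j, i < j ∧ v = G j}

theorem cosetD_le_hammingDist {G : Matrix (Fin k) (Fin n) (ZMod 2)} {i : Fin k}
    {w : Fin n → ZMod 2} (hw : w ∈ laterRowSpan G i) : cosetD G i ≤ hammingDist (G i) w :=
  Nat.sInf_le ⟨w, hw, rfl⟩

theorem exists_hammingDist_eq_cosetD (G : Matrix (Fin k) (Fin n) (ZMod 2)) (i : Fin k) :
    ∃ w ∈ laterRowSpan G i, hammingDist (G i) w = cosetD G i := by
  have hne : (hammingDist (G i) '' (laterRowSpan G i : Set (Fin n → ZMod 2))).Nonempty :=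
    ⟨_, 0, Submodule.zero_mem _, rfl⟩
  exact Nat.sInf_mem hne

theorem le_cosetD {G : Matrix (Fin k) (Fin n) (ZMod 2)} {i : Fin k} {d : ℕ}
    (h : ∀ w ∈ laterRowSpan G i, d ≤ hammingDist (G i) w) : d ≤ cosetD G i :=
  le_csInf ⟨_, 0, Submodule.zero_mem _, rfl⟩ fun _ ⟨w, hw, hd⟩ => hd ▸ h w hw

theorem map_laterRowSpan_le {G : Matrix (Fin k) (Fin n) (ZMod 2)}
    {H : Matrix (Fin l) (Fin p) (ZMod 2)} (f : (Fin n → ZMod 2) →ₗ[ZMod 2] (Fin p → ZMod 2))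
    {e : Fin k → Fin l} (he : StrictMono e) (hf : ∀ j, f (G j) = H (e j)) (i : Fin k) :
    (laterRowSpan G i).map f ≤ laterRowSpan H (e i) := by
  rw [laterRowSpan, Submodule.map_span]
  refine Submodule.span_mono ?_
  rintro _ ⟨_, ⟨j, hij, rfl⟩, rfl⟩
  exact ⟨e j, he hij, hf j⟩

theorem cosetD_le_of_map {G : Matrix (Fin k) (Fin n) (ZMod 2)}
    {H : Matrix (Fin l) (Fin p) (ZMod 2)} (f : (Fin n → ZMod 2) →ₗ[ZMod 2] (Fin p → ZMod 2))
    {e : Fin k → Fin l} (he : StrictMono e) (hf : ∀ j, f (G j) = H (e j)) (φ : ℕ → ℕ)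
    (hφ : ∀ x y, hammingDist (f x) (f y) ≤ φ (hammingDist x y)) (i : Fin k) :
    cosetD H (e i) ≤ φ (cosetD G i) := by
  obtain ⟨w, hw, hwd⟩ := exists_hammingDist_eq_cosetD G i
  calc cosetD H (e i)
      ≤ hammingDist (H (e i)) (f w) :=
        cosetD_le_hammingDist (map_laterRowSpan_le f he hf i (Submodule.mem_map_of_mem hw))
    _ ≤ φ (cosetD G i) := hwd ▸ hf i ▸ hφ _ _

theorem laterRowSpan_castAdd_le {G : Matrix (Fin l) (Fin n) (ZMod 2)}
    {H : Matrix (Fin (l + k)) (Fin p) (ZMod 2)}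
    (f : (Fin n → ZMod 2) →ₗ[ZMod 2] (Fin p → ZMod 2)) (W : Submodule (ZMod 2) (Fin p → ZMod 2))
    (hf : ∀ j, H (Fin.castAdd k j) = f (G j)) (hW : ∀ j, H (Fin.natAdd l j) ∈ W) (i : Fin l) :
    laterRowSpan H (Fin.castAdd k i) ≤ (laterRowSpan G i).map f ⊔ W := by
  refine Submodule.span_le.mpr ?_
  rintro _ ⟨j, hij, rfl⟩
  induction j using Fin.addCases with
  | left j =>
    rw [hf j]
    exact Submodule.mem_sup_left (Submodule.mem_map_of_mem
      (Submodule.subset_span ⟨j, (Fin.strictMono_castAdd k).lt_iff_lt.mp hij, rfl⟩))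
  | right j => exact Submodule.mem_sup_right (hW j)

end CosetSpectrum

theorem right_stitched_coset_spectrum_le_general (N' N'' : ℕ)
    (G' : Matrix (Fin N') (Fin N') (ZMod 2))
    (G'' : Matrix (Fin N'') (Fin N'') (ZMod 2))
    (γ : Fin N' → Fin N'') (hγ : Function.Injective γ) :
    let P : Matrix (Fin N'') (Fin N') (ZMod 2) := fun i j => G'' i (γ j)
    let G : Matrix (Fin (N' + N'')) (Fin (N' + N'')) (ZMod 2) :=
      Matrix.reindex finSumFinEquiv finSumFinEquiv (Matrix.fromBlocks G' 0 P G'')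
    (∀ i : Fin N', cosetD G (Fin.castAdd N'' i) = cosetD G' i) ∧
    (∀ i : Fin N'', cosetD G (Fin.natAdd N' i) ≤
      min (cosetD G'' i + N') (2 * cosetD G'' i)) := by
  intro P G
  have hleft (j : Fin N') : G (Fin.castAdd N'' j) = leftStitch (ZMod 2) N' (G' j) :=
    reindex_fromBlocks_castAdd _ _ _ _ j
  have hright (j : Fin N'') : G (Fin.natAdd N' j) = rightStitch (ZMod 2) γ (G'' j) :=
    reindex_fromBlocks_natAdd _ _ _ _ j
  refine ⟨fun i => le_antisymm ?_ ?_, fun i => ?_⟩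
  · exact cosetD_le_of_map _ (Fin.strictMono_castAdd N'') (fun j => (hleft j).symm) id
      (fun x y => (hammingDist_leftStitch x y).le) i
  · refine le_cosetD fun w hw => ?_
    obtain ⟨_, ⟨u, hu, rfl⟩, _, ⟨z, -, rfl⟩, rfl⟩ := Submodule.mem_sup.mp
      (laterRowSpan_castAdd_le _ (LinearMap.range (rightStitch (ZMod 2) γ)) hleft
        (fun j => hright j ▸ LinearMap.mem_range_self _ _) i hw)
    exact (cosetD_le_hammingDist hu).trans
      (hleft i ▸ hammingDist_le_leftStitch_add_rightStitch hγ _ u z)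
  · exact cosetD_le_of_map _ (Fin.strictMono_natAdd N') (fun j => (hright j).symm)
      (fun d => min (d + N') (2 * d))
      (hammingDist_rightStitch_le hγ) i

/-- Lemma 3 (right-stitched polar codes, `N' ≤ N''`): with
`G = [[G',0],[P,G'']]` where `P = G''_{·,Γ'}` selects `N'` columns of `G''`,
the coset spectrum of `G` satisfies `D_i = D'_i` for `i ≤ N'` and
`D_i ≤ min(D''_{i-N'} + N', 2·D''_{i-N'})` for `i > N'`. -/
theorem right_stitched_coset_spectrum_le (N' N'' : ℕ) (hle : N' ≤ N'')
    (G' : Matrix (Fin N') (Fin N') (ZMod 2))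
    (G'' : Matrix (Fin N'') (Fin N'') (ZMod 2))
    (γ : Fin N' → Fin N'') (hγ : Function.Injective γ) :
    let P : Matrix (Fin N'') (Fin N') (ZMod 2) := fun i j => G'' i (γ j)
    let G : Matrix (Fin (N' + N'')) (Fin (N' + N'')) (ZMod 2) :=
      Matrix.reindex finSumFinEquiv finSumFinEquiv (Matrix.fromBlocks G' 0 P G'')
    (∀ i : Fin N', cosetD G (Fin.castAdd N'' i) = cosetD G' i) ∧
    (∀ i : Fin N'', cosetD G (Fin.natAdd N' i) ≤
      min (cosetD G'' i + N') (2 * cosetD G'' i)) :=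
  right_stitched_coset_spectrum_le_general N' N'' G' G'' γ hγ
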